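/- If a continuous function f : [0,1] → ℝ satisfies, for some n* ∈ ℕ and γ ∈ (0,1/2), the dyadic bound |f((k−1)/2ⁿ) − f(k/2ⁿ)| < 2^{−nγ} for all n ≥ n* and 1 ≤ k ≤ 2ⁿ, then for all s < t in [0,1] with 0 < t − s < 2^{−n*} one has |f(t) − f(s)| ≤ (2/(1 − 2^{−γ})) (t − s)^γ; in particular f is locally Hölder continuous with exponent γ. -/

import Mathlib

open Real Set Filter Topology

/-! Approximate each point from below by the dyadics `⌊x 2^m⌋ / 2^m`. Consecutive approximations
differ by at most one step of the finer grid, so with `ρ = 2^(-γ)` the value `f x` is within the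
geometric tail `ρ^(m+1) / (1 - ρ)` of its level-`m` approximation (continuity passes to the limit).
For the level `m` with `2^(-m) < t - s ≤ 2^(1-m)` the approximations of `s` and `t` are at most two
grid steps apart, so `|f t - f s| ≤ 2 ρ^(m+1) / (1 - ρ) + 2 ρ^m = 2 ρ^m / (1 - ρ)`, and
`ρ^m = (2^(-m))^γ ≤ (t - s)^γ`. -/

noncomputable def dyadicFloor (m : ℕ) (x : ℝ) : ℝ := ⌊x * 2 ^ m⌋₊ / 2 ^ m

def DyadicIncrementsLE (f : ℝ → ℝ) (m : ℕ) (ε : ℝ) : Prop :=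
  ∀ k : ℕ, 1 ≤ k → k ≤ 2 ^ m → |f ((k - 1) / 2 ^ m) - f (k / 2 ^ m)| ≤ ε

lemma DyadicIncrementsLE.nonneg {f : ℝ → ℝ} {m : ℕ} {ε : ℝ} (h : DyadicIncrementsLE f m ε) :
    0 ≤ ε :=
  (abs_nonneg _).trans (h 1 le_rfl Nat.one_le_two_pow)

lemma DyadicIncrementsLE.abs_sub_le_mul {f : ℝ → ℝ} {m : ℕ} {ε : ℝ} (h : DyadicIncrementsLE f m ε)
    {i j : ℕ} (hij : i ≤ j) (hj : j ≤ 2 ^ m) :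
    |f (j / 2 ^ m) - f (i / 2 ^ m)| ≤ (j - i) * ε := by
  induction j, hij using Nat.le_induction with
  | base => simp
  | succ j hij ih =>
    have hstep := h (j + 1) (Nat.le_add_left 1 j) hj
    push_cast at hstep ⊢
    rw [add_sub_cancel_right, abs_sub_comm] at hstep
    calc |f ((j + 1) / 2 ^ m) - f (i / 2 ^ m)|
        ≤ |f ((j + 1) / 2 ^ m) - f (j / 2 ^ m)| + |f (j / 2 ^ m) - f (i / 2 ^ m)| :=
          _root_.abs_sub_le _ _ _
      _ ≤ ε + (j - i) * ε := add_le_add hstep (ih (by omega))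
      _ = (j + 1 - i) * ε := by ring

lemma floor_mul_two_pow_le_two_pow {x : ℝ} (hx : x ≤ 1) (m : ℕ) : ⌊x * 2 ^ m⌋₊ ≤ 2 ^ m :=
  Nat.floor_le_of_le (by push_cast; exact mul_le_of_le_one_left (by positivity) hx)

lemma floor_mul_two_pow_succ_div_two (x : ℝ) (m : ℕ) :
    ⌊x * 2 ^ (m + 1)⌋₊ / 2 = ⌊x * 2 ^ m⌋₊ := by
  rw [← Nat.floor_div_ofNat, pow_succ, ← mul_assoc, mul_div_cancel_right₀ _ two_ne_zero]

lemma dyadicFloor_mem_Icc {x : ℝ} (hx : x ∈ Icc 0 1) (m : ℕ) : dyadicFloor m x ∈ Icc 0 1 := by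
  refine ⟨by unfold dyadicFloor; positivity, ?_⟩
  rw [dyadicFloor, div_le_one (by positivity)]
  exact_mod_cast floor_mul_two_pow_le_two_pow hx.2 m

lemma tendsto_dyadicFloor {x : ℝ} (hx : 0 ≤ x) :
    Tendsto (fun m => dyadicFloor m x) atTop (𝓝 x) := by
  have hlow : Tendsto (fun m : ℕ => x - (1 / 2) ^ m) atTop (𝓝 x) := by
    simpa using tendsto_const_nhds.sub
      (tendsto_pow_atTop_nhds_zero_of_lt_one (by norm_num : (0:ℝ) ≤ 1 / 2) (by norm_num))
  refine tendsto_of_tendsto_of_tendsto_of_le_of_le hlow tendsto_const_nhds (fun m => ?_)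
    (fun m => ?_)
  · rw [dyadicFloor, le_div_iff₀ (by positivity), sub_mul, one_div_pow,
      one_div_mul_cancel (by positivity)]
    linarith [Nat.lt_floor_add_one (x * 2 ^ m)]
  · rw [dyadicFloor, div_le_iff₀ (by positivity)]
    exact Nat.floor_le (by positivity)

lemma DyadicIncrementsLE.abs_sub_dyadicFloor_succ_le {f : ℝ → ℝ} {m : ℕ} {ε : ℝ}
    (h : DyadicIncrementsLE f (m + 1) ε) {x : ℝ} (hx : x ∈ Icc 0 1) :
    |f (dyadicFloor (m + 1) x) - f (dyadicFloor m x)| ≤ ε := by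
  have hcoarse : dyadicFloor m x = ((2 * (⌊x * 2 ^ (m + 1)⌋₊ / 2) : ℕ) : ℝ) / 2 ^ (m + 1) := by
    rw [dyadicFloor, ← floor_mul_two_pow_succ_div_two]
    generalize ⌊x * 2 ^ (m + 1)⌋₊ = j
    push_cast
    rw [pow_succ]
    field_simp
  rw [hcoarse]
  set j := ⌊x * 2 ^ (m + 1)⌋₊
  calc _ ≤ ((j : ℝ) - (2 * (j / 2) : ℕ)) * ε :=
        h.abs_sub_le_mul (Nat.mul_div_le j 2) (floor_mul_two_pow_le_two_pow hx.2 _)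
    _ ≤ 1 * ε := by
        gcongr
        · exact h.nonneg
        · have : j ≤ 2 * (j / 2) + 1 := by omega
          rw [sub_le_iff_le_add']
          exact_mod_cast this
    _ = ε := one_mul ε

lemma DyadicIncrementsLE.abs_sub_dyadicFloor_le {f : ℝ → ℝ} {m : ℕ} {ε : ℝ}
    (h : DyadicIncrementsLE f m ε) {s t : ℝ} (hs : 0 ≤ s) (hst : s ≤ t) (ht : t ≤ 1)
    (hts : t - s ≤ 2 / 2 ^ m) :
    |f (dyadicFloor m t) - f (dyadicFloor m s)| ≤ 2 * ε := by
  have hsteps : ⌊t * 2 ^ m⌋₊ ≤ ⌊s * 2 ^ m⌋₊ + 2 := by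
    rw [← Nat.floor_add_ofNat (by positivity)]
    refine Nat.floor_le_floor ?_
    rw [le_div_iff₀ (by positivity)] at hts
    linarith
  calc _ ≤ ((⌊t * 2 ^ m⌋₊ : ℝ) - ⌊s * 2 ^ m⌋₊) * ε :=
        h.abs_sub_le_mul (Nat.floor_le_floor (by gcongr)) (floor_mul_two_pow_le_two_pow ht m)
    _ ≤ 2 * ε := by
        gcongr
        · exact h.nonneg
        · rw [sub_le_iff_le_add']
          exact_mod_cast hsteps

lemma abs_sub_dyadicFloor_le_of_geometric {f : ℝ → ℝ} (hf : ContinuousOn f (Icc 0 1))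
    {ρ : ℝ} (hρ0 : 0 ≤ ρ) (hρ1 : ρ < 1) {m : ℕ}
    (h : ∀ n > m, DyadicIncrementsLE f n (ρ ^ n)) {x : ℝ} (hx : x ∈ Icc 0 1) :
    |f x - f (dyadicFloor m x)| ≤ ρ ^ (m + 1) / (1 - ρ) := by
  have hlim : Tendsto (fun j => f (dyadicFloor (j + m) x)) atTop (𝓝 (f x)) :=
    (hf x hx).tendsto.comp <| tendsto_nhdsWithin_iff.2
      ⟨(tendsto_dyadicFloor hx.1).comp (tendsto_add_atTop_nat m),
        Eventually.of_forall fun j => dyadicFloor_mem_Icc hx _⟩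
  have hstep : ∀ j, dist (f (dyadicFloor (j + m) x)) (f (dyadicFloor (j + 1 + m) x)) ≤
      ρ ^ (m + 1) * ρ ^ j := fun j => by
    rw [dist_comm, Real.dist_eq, ← pow_add, Nat.add_right_comm j,
      show m + 1 + j = j + m + 1 by omega]
    exact (h (j + m + 1) (by omega)).abs_sub_dyadicFloor_succ_le hx
  have := dist_le_tsum_of_dist_le_of_tendsto₀ _ hstep
    ((summable_geometric_of_lt_one hρ0 hρ1).mul_left _) hlim
  rwa [tsum_mul_left, tsum_geometric_of_lt_one hρ0 hρ1, zero_add, dist_comm, Real.dist_eq,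
    ← div_eq_mul_inv] at this

lemma two_rpow_neg_mul_eq_pow (γ : ℝ) (n : ℕ) : (2 : ℝ) ^ (-(n : ℝ) * γ) = (2 ^ (-γ)) ^ n := by
  rw [← Real.rpow_natCast, ← Real.rpow_mul zero_le_two]
  ring_nf

lemma two_rpow_neg_pow_eq_rpow (γ : ℝ) (n : ℕ) : ((2 : ℝ) ^ (-γ)) ^ n = ((1 / 2) ^ n) ^ γ := by
  rw [← two_rpow_neg_mul_eq_pow, one_div_pow, Real.div_rpow zero_le_one (by positivity),
    Real.one_rpow, ← Real.rpow_natCast, ← Real.rpow_mul zero_le_two, one_div,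
    ← Real.rpow_neg zero_le_two, neg_mul]

theorem stmt_9 (f : ℝ → ℝ) (hf : ContinuousOn f (Set.Icc 0 1))
    (γ : ℝ) (hγ : γ ∈ Set.Ioo (0:ℝ) (1/2)) (nstar : ℕ)
    (hdy : ∀ n ≥ nstar, ∀ k : ℕ, 1 ≤ k → k ≤ 2^n →
      |f (((k:ℝ) - 1) / 2^n) - f ((k:ℝ) / 2^n)| < (2:ℝ) ^ (-(n:ℝ) * γ)) :
    ∀ s t : ℝ, s ∈ Set.Icc (0:ℝ) 1 → t ∈ Set.Icc (0:ℝ) 1 → s < t →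
      t - s < (2:ℝ) ^ (-(nstar:ℝ)) →
      |f t - f s| ≤ (2 / (1 - (2:ℝ) ^ (-γ))) * (t - s) ^ γ := by
  intro s t hs ht hst hts
  set ρ := (2 : ℝ) ^ (-γ)
  have hρ0 : 0 ≤ ρ := by positivity
  have hρ1 : ρ < 1 := Real.rpow_lt_one_of_one_lt_of_neg one_lt_two (neg_lt_zero.2 hγ.1)
  have h1ρ : 0 < 1 - ρ := sub_pos.2 hρ1
  have hinc : ∀ n ≥ nstar, DyadicIncrementsLE f n (ρ ^ n) := fun n hn k hk1 hk2 =>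
    two_rpow_neg_mul_eq_pow γ n ▸ (hdy n hn k hk1 hk2).le
  have hnstar : t - s < (1 / 2) ^ nstar := by
    rwa [Real.rpow_neg zero_le_two, Real.rpow_natCast, ← inv_pow, ← one_div] at hts
  obtain ⟨n, hlow, hhigh⟩ := exists_nat_pow_near_of_lt_one (sub_pos.2 hst)
    (hnstar.le.trans (pow_le_one₀ (by norm_num) (by norm_num))) one_half_pos one_half_lt_one
  have hn : nstar < n + 1 :=
    (pow_lt_pow_iff_right_of_lt_one₀ one_half_pos one_half_lt_one).1 (hlow.trans hnstar)
  have hfine : ∀ k > n + 1, DyadicIncrementsLE f k (ρ ^ k) := fun k hk => hinc k (by omega)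
  calc |f t - f s|
      ≤ |f t - f (dyadicFloor (n + 1) t)| +
          |f (dyadicFloor (n + 1) t) - f (dyadicFloor (n + 1) s)| +
          |f (dyadicFloor (n + 1) s) - f s| := by
        simpa only [Real.dist_eq] using dist_triangle4 (f t) _ _ (f s)
    _ ≤ ρ ^ (n + 2) / (1 - ρ) + 2 * ρ ^ (n + 1) + ρ ^ (n + 2) / (1 - ρ) := by
        gcongr
        · exact abs_sub_dyadicFloor_le_of_geometric hf hρ0 hρ1 hfine ht
        · refine (hinc _ hn.le).abs_sub_dyadicFloor_le hs.1 hst.le ht.2 ?_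
          exact hhigh.trans_eq (by rw [one_div_pow, pow_succ]; field_simp)
        · rw [abs_sub_comm]
          exact abs_sub_dyadicFloor_le_of_geometric hf hρ0 hρ1 hfine hs
    _ = 2 / (1 - ρ) * ρ ^ (n + 1) := by
        field_simp
        ring
    _ ≤ 2 / (1 - ρ) * (t - s) ^ γ := by
        rw [two_rpow_neg_pow_eq_rpow]
        gcongr
        exact hγ.1.le
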